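/- A permutation avoids the barred pattern 41\bar{3}52 if and only if it avoids the vincular pattern 3[14]2; that is, Av(41\bar{3}52) = Av(3[14]2). -/

import Mathlib

/-- The type of permutations of arbitrary (finite) length: a permutation of
length `n`, written in one-line notation as `w 0, w 1, …, w (n-1)` (using
0-indexed positions and values), is a bijection of `Fin n`. -/
def Permutation : Type := Σ n : ℕ, Equiv.Perm (Fin n)

/-- `f` is an occurrence of the classical pattern `p` in `w`: `f` selects
positions, in increasing order, whose values in `w` are order-isomorphic
to `p`. -/
def IsOcc {k n : ℕ} (p : Equiv.Perm (Fin k)) (w : Equiv.Perm (Fin n))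
    (f : Fin k → Fin n) : Prop :=
  StrictMono f ∧ ∀ i j : Fin k, p i < p j ↔ w (f i) < w (f j)

/-- The permutation `w` contains the classical pattern `p`. -/
def ContainsC {k n : ℕ} (p : Equiv.Perm (Fin k)) (w : Equiv.Perm (Fin n)) : Prop :=
  ∃ f : Fin k → Fin n, IsOcc p w f

/-- The set of permutations avoiding the classical pattern `p`. -/
def AvC {k : ℕ} (p : Equiv.Perm (Fin k)) : Set Permutation :=
  {w : Permutation | ¬ ContainsC p w.2}

/-- A barred pattern: a permutation together with a (nonempty) set of barred
positions. -/
structure BarredPattern where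
  len : ℕ
  perm : Equiv.Perm (Fin len)
  barred : Finset (Fin len)
  barred_nonempty : barred.Nonempty

/-- A barred pattern is proper if the barred positions form a proper subset
of all positions. -/
def BarredPattern.Proper (b : BarredPattern) : Prop := b.barred ≠ Finset.univ

/-- The underlying classical pattern of a barred pattern. -/
def BarredPattern.toPermutation (b : BarredPattern) : Permutation := ⟨b.len, b.perm⟩

/-- `w` contains the barred pattern `b`: there is an occurrence of the
unbarred portion of `b` in `w` (recorded by the values of `g` on the unbarred
positions) that cannot be completed to an occurrence of the underlying
classical pattern of `b` with the barred letters filled in, in their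
prescribed relative positions and values. -/
def BarredPattern.ContainedIn (b : BarredPattern) {n : ℕ}
    (w : Equiv.Perm (Fin n)) : Prop :=
  ∃ g : Fin b.len → Fin n,
    (∀ i j : Fin b.len, i ∉ b.barred → j ∉ b.barred → i < j → g i < g j) ∧
    (∀ i j : Fin b.len, i ∉ b.barred → j ∉ b.barred →
      (b.perm i < b.perm j ↔ w (g i) < w (g j))) ∧
    ¬ ∃ f : Fin b.len → Fin n, IsOcc b.perm w f ∧ ∀ i ∉ b.barred, f i = g i

/-- The set of permutations avoiding the barred pattern `b`. -/
def AvB (b : BarredPattern) : Set Permutation :=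
  {w : Permutation | ¬ b.ContainedIn w.2}

/-- A vincular pattern: a permutation together with a set of bonds, encoded
as elements of `Fin (len+1)`: bond `0` bonds the first letter to the left
endpoint `*`, bond `len` bonds the last letter to the right endpoint `*`, and
a bond `β` with `0 < β < len` bonds the letters in (0-indexed) positions
`β - 1` and `β`. -/
structure VincularPattern where
  len : ℕ
  perm : Equiv.Perm (Fin len)
  bonds : Finset (Fin (len + 1))

/-- A vincular pattern is proper if it has at least one bond and its letters
are not all bonded together into a single block. -/
def VincularPattern.Proper (v : VincularPattern) : Prop :=
  v.bonds.Nonempty ∧ ∃ β : Fin (v.len + 1), 0 < (β : ℕ) ∧ (β : ℕ) < v.len ∧ β ∉ v.bonds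

/-- The underlying classical pattern of a vincular pattern. -/
def VincularPattern.toPermutation (v : VincularPattern) : Permutation := ⟨v.len, v.perm⟩

/-- `w` contains the vincular pattern `v`: there is an occurrence of the
underlying classical pattern of `v` in which any two bonded letters occupy
adjacent positions of `w`, a letter bonded to the left `*` occupies the first
position of `w`, and a letter bonded to the right `*` occupies the last
position of `w`. -/
def VincularPattern.ContainedIn (v : VincularPattern) {n : ℕ}
    (w : Equiv.Perm (Fin n)) : Prop :=
  ∃ f : Fin v.len → Fin n,
    IsOcc v.perm w f ∧
    (∀ β : Fin (v.len + 1), β ∈ v.bonds →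
      ∀ (h1 : 0 < (β : ℕ)) (h2 : (β : ℕ) < v.len),
        (f ⟨(β : ℕ), h2⟩ : ℕ) = (f ⟨(β : ℕ) - 1, by omega⟩ : ℕ) + 1) ∧
    ((0 : Fin (v.len + 1)) ∈ v.bonds → ∀ h : 0 < v.len, (f ⟨0, h⟩ : ℕ) = 0) ∧
    ((⟨v.len, by omega⟩ : Fin (v.len + 1)) ∈ v.bonds →
      ∀ h : 0 < v.len, (f ⟨v.len - 1, by omega⟩ : ℕ) = n - 1)

/-- The set of permutations avoiding the vincular pattern `v`. -/
def AvV (v : VincularPattern) : Set Permutation :=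
  {w : Permutation | ¬ v.ContainedIn w.2}

/-- `bond b`: the set of vincular patterns obtained from the barred pattern
`b` by deleting a nonempty subset `T` of the barred letters (flattening the
remaining letters to a pattern, using the order-preserving bijection `r` onto
the undeleted positions), placing a bond at each site where a letter was
deleted (a site is indexed by the number of undeleted positions to the left
of the deleted letter), and ignoring the bars on any remaining barred
letters. -/
def BarredPattern.bond (b : BarredPattern) : Set VincularPattern :=
  {v : VincularPattern | ∃ T : Finset (Fin b.len), T ⊆ b.barred ∧ T.Nonempty ∧
    ∃ r : Fin v.len → Fin b.len, StrictMono r ∧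
      (∀ i : Fin b.len, i ∉ T ↔ ∃ j : Fin v.len, r j = i) ∧
      (∀ i j : Fin v.len, v.perm i < v.perm j ↔ b.perm (r i) < b.perm (r j)) ∧
      ∀ β : Fin (v.len + 1), β ∈ v.bonds ↔
        ∃ t ∈ T, (β : ℕ) = (Finset.univ.filter fun i : Fin b.len => i ∉ T ∧ i < t).card}

/-- A proper barred pattern `b` is naturally coincidental (nat-co) if
`Av(b) = Av(bond b)`. -/
def BarredPattern.NatCo (b : BarredPattern) : Prop :=
  AvB b = ⋂ v ∈ b.bond, AvV v

/-- `q` is obtained from `p` by inserting a single new letter in position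
`pos`: deleting position `pos` from `q` leaves a sequence order-isomorphic
to `p`. -/
def IsInsertionAt {k : ℕ} (p : Equiv.Perm (Fin k)) (pos : Fin (k + 1))
    (q : Equiv.Perm (Fin (k + 1))) : Prop :=
  ∀ i j : Fin k, p i < p j ↔ q (pos.succAbove i) < q (pos.succAbove j)

/-- `bar v`: the set of barred patterns obtained from the vincular pattern
`v` by replacing a single bond (at site `β`) of `v` by an inserted barred
letter, in such a way that the resulting underlying classical pattern does
not contain `v`, ignoring all remaining bonds. -/
def VincularPattern.bar (v : VincularPattern) : Set BarredPattern :=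
  {b : BarredPattern | ∃ β ∈ v.bonds, ∃ hlen : b.len = v.len + 1,
    b.barred = {finCongr hlen.symm β} ∧
    IsInsertionAt v.perm β ((finCongr hlen).permCongr b.perm) ∧
    ¬ v.ContainedIn ((finCongr hlen).permCongr b.perm)}

/-- A vincular pattern is coincidental if its avoidance set equals the
avoidance set of some finite set of proper barred patterns. -/
def VincularPattern.Coincidental (v : VincularPattern) : Prop :=
  ∃ B : Set BarredPattern, B.Finite ∧ (∀ b ∈ B, b.Proper) ∧
    AvV v = ⋂ b ∈ B, AvB b

/-- `(i, j)` (0-indexed positions) delimits a maximal factor of consecutive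
barred letters of the barred pattern `b`, thereby determining a boycott
of `b`. -/
def BarredPattern.IsBoycottPair (b : BarredPattern) (i j : ℕ) : Prop :=
  i ≤ j ∧ j < b.len ∧
  (∀ p : Fin b.len, i ≤ (p : ℕ) → (p : ℕ) ≤ j → p ∈ b.barred) ∧
  (∀ p : Fin b.len, (p : ℕ) + 1 = i → p ∉ b.barred) ∧
  (∀ p : Fin b.len, (p : ℕ) = j + 1 → p ∉ b.barred)

/-- The boycott `X` determined by the maximal barred factor `(i, j)` of `b`:
the set of (1-indexed) values of the letters in positions `i-1, i, …, j, j+1`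
(those endpoints that exist). -/
def BarredPattern.boycottSet (b : BarredPattern) (i j : ℕ) : Finset ℕ :=
  (Finset.univ.filter fun p : Fin b.len => i ≤ (p : ℕ) + 1 ∧ (p : ℕ) ≤ j + 1).image
    fun p => (b.perm p : ℕ) + 1

/-- `B(X)`: the barred values of the boycott of `b` determined by `(i, j)`. -/
def BarredPattern.boycottB (b : BarredPattern) (i j : ℕ) : Finset ℕ :=
  (Finset.univ.filter fun p : Fin b.len => i ≤ (p : ℕ) ∧ (p : ℕ) ≤ j).image
    fun p => (b.perm p : ℕ) + 1

/-- `U(X)`: the unbarred values of the boycott of `b` determined by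
`(i, j)`. -/
def BarredPattern.boycottU (b : BarredPattern) (i j : ℕ) : Finset ℕ :=
  (Finset.univ.filter fun p : Fin b.len => (p : ℕ) + 1 = i ∨ (p : ℕ) = j + 1).image
    fun p => (b.perm p : ℕ) + 1

/-- The barred pattern `41‾352`: the permutation `41352` with the letter `3`
(in position `2`, 0-indexed) barred. -/
def barred41352 : BarredPattern where
  len := 5
  perm := ⟨![3, 0, 2, 4, 1], ![1, 4, 2, 0, 3], by decide, by decide⟩
  barred := {2}
  barred_nonempty := Finset.singleton_nonempty _

/-- The vincular pattern `3[14]2`: the permutation `3142` with a bond between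
the letters `1` and `4` (positions `1` and `2`, so bond site `2`). -/
def vincular3142 : VincularPattern where
  len := 4
  perm := ⟨![2, 0, 3, 1], ![1, 3, 0, 2], by decide, by decide⟩
  bonds := {2}

/-!
An occurrence of `3142` whose `1` and `4` are adjacent in `w` cannot be completed to `41352`,
since no position lies between them. Conversely, let `a b c d` be an occurrence of `4152` that
no letter between `b` and `c` completes to `41352`: every letter strictly between `b` and `c` is
then below `d` or above `a`. Walking from `b` (below `d`) to `c` (above `a`), some step goes
directly from below `d` to above `a`, and these two adjacent letters together with `a` and `d`
form an occurrence of `3[14]2`.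
-/

open Equiv

theorem isOcc_iff_strictMono {k n : ℕ} {p : Perm (Fin k)} {w : Perm (Fin n)} {f : Fin k → Fin n} :
    IsOcc p w f ↔ StrictMono f ∧ StrictMono (w ∘ f ∘ p.symm) := by
  refine and_congr_right fun _ => ⟨fun h i j hij => ?_, fun h i j => ?_⟩
  · simpa using (h (p.symm i) (p.symm j)).1 (by simpa using hij)
  · simpa using (h.lt_iff_lt (a := p i) (b := p j)).symm

theorem Fin.exists_adjacent_jump {α : Type*} [LinearOrder α] {n : ℕ} (f : Fin n → α)
    {lo hi : α} {b c : Fin n} (hbc : b < c) (hb : f b < lo) (hc : hi < f c)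
    (hgap : ∀ e, b < e → e < c → f e < lo ∨ hi < f e) :
    ∃ e e' : Fin n, b ≤ e ∧ (e' : ℕ) = e + 1 ∧ e' ≤ c ∧ f e < lo ∧ hi < f e' := by
  classical
  obtain ⟨e, heS, hmax⟩ :=
    (Finset.univ.filter fun e => b ≤ e ∧ e < c ∧ f e < lo).exists_max_image id
      ⟨b, by simp [hbc, hb]⟩
  simp only [Finset.mem_filter, Finset.mem_univ, true_and, id] at heS hmax
  obtain ⟨hbe, hec, he⟩ := heS
  obtain ⟨e', he'⟩ : ∃ e' : Fin n, (e' : ℕ) = e + 1 :=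
    ⟨⟨e + 1, Nat.lt_of_le_of_lt (Fin.lt_def.1 hec) c.isLt⟩, rfl⟩
  have he'c : e' ≤ c := Fin.le_def.2 (by rw [he']; exact Fin.lt_def.1 hec)
  refine ⟨e, e', hbe, he', he'c, he, ?_⟩
  rcases he'c.lt_or_eq with he'c | rfl
  · have hbe' : b < e' := Fin.lt_def.2 (by rw [he']; exact Nat.lt_succ_of_le hbe)
    refine (hgap e' hbe' he'c).resolve_left fun hlo => ?_
    exact absurd (hmax e' ⟨hbe'.le, he'c, hlo⟩) (by simp [Fin.le_def, he'])
  · exact hc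

theorem BarredPattern.containedIn_singleton_iff {k n : ℕ} [NeZero k] {p : Perm (Fin (k + 1))}
    {t : Fin (k + 1)} {q : Perm (Fin k)} (hq : IsInsertionAt q t p) (w : Perm (Fin n)) :
    (⟨k + 1, p, {t}, Finset.singleton_nonempty t⟩ : BarredPattern).ContainedIn w ↔
      ∃ h : Fin k → Fin n, IsOcc q w h ∧ ¬ ∃ f, IsOcc p w f ∧ f ∘ t.succAbove = h := by
  have hbarred : ∀ i, i ∉ ({t} : Finset (Fin (k + 1))) ↔ ∃ j, t.succAbove j = i := fun i => by
    simp [Fin.exists_succAbove_eq_iff]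
  constructor
  · rintro ⟨g, hmono, hval, hext⟩
    have hne : ∀ j, t.succAbove j ∉ ({t} : Finset (Fin (k + 1))) := fun j => (hbarred _).2 ⟨j, rfl⟩
    refine ⟨g ∘ t.succAbove, ⟨fun i j hij => hmono _ _ (hne i) (hne j)
      (Fin.strictMono_succAbove t hij), fun i j => (hq i j).trans (hval _ _ (hne i) (hne j))⟩, ?_⟩
    rintro ⟨f, hf, hfg⟩
    refine hext ⟨f, hf, fun i hi => ?_⟩
    obtain ⟨j, rfl⟩ := (hbarred i).1 hi
    exact congrFun hfg j
  · rintro ⟨h, ⟨hmono, hval⟩, hext⟩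
    refine ⟨Fin.insertNth t (h 0) h, fun i j hi hj hij => ?_, fun i j hi hj => ?_, ?_⟩
    · obtain ⟨i, rfl⟩ := (hbarred i).1 hi
      obtain ⟨j, rfl⟩ := (hbarred j).1 hj
      simpa using hmono ((Fin.strictMono_succAbove t).lt_iff_lt.1 hij)
    · obtain ⟨i, rfl⟩ := (hbarred i).1 hi
      obtain ⟨j, rfl⟩ := (hbarred j).1 hj
      simp [(hq i j).symm.trans (hval i j)]
    · rintro ⟨f, hf, hfg⟩
      exact hext ⟨f, hf, funext fun j => by simpa using hfg _ ((hbarred _).2 ⟨j, rfl⟩)⟩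

theorem isOcc_vincular3142_iff {n : ℕ} {w : Perm (Fin n)} {f : Fin 4 → Fin n} :
    IsOcc vincular3142.perm w f ↔ (f 0 < f 1 ∧ f 1 < f 2 ∧ f 2 < f 3) ∧
      (w (f 1) < w (f 3) ∧ w (f 3) < w (f 0) ∧ w (f 0) < w (f 2)) := by
  simp [isOcc_iff_strictMono, Fin.strictMono_iff_lt_succ, Fin.forall_fin_succ, vincular3142]

theorem isOcc_barred41352_iff {n : ℕ} {w : Perm (Fin n)} {f : Fin 5 → Fin n} :
    IsOcc barred41352.perm w f ↔ (f 0 < f 1 ∧ f 1 < f 2 ∧ f 2 < f 3 ∧ f 3 < f 4) ∧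
      (w (f 1) < w (f 4) ∧ w (f 4) < w (f 2) ∧ w (f 2) < w (f 0) ∧ w (f 0) < w (f 3)) := by
  simp [isOcc_iff_strictMono, Fin.strictMono_iff_lt_succ, Fin.forall_fin_succ, barred41352]

theorem vincular3142_containedIn_iff {n : ℕ} (w : Perm (Fin n)) :
    vincular3142.ContainedIn w ↔ ∃ a b c d : Fin n, a < b ∧ (c : ℕ) = b + 1 ∧ c < d ∧
      w b < w d ∧ w d < w a ∧ w a < w c := by
  constructor
  · rintro ⟨f, hf, hbond, -, -⟩
    obtain ⟨⟨hab, -, hcd⟩, hbd, hda, hac⟩ := isOcc_vincular3142_iff.1 hf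
    exact ⟨f (0 : Fin 4), f (1 : Fin 4), f (2 : Fin 4), f (3 : Fin 4), hab,
      hbond 2 (Finset.mem_singleton_self _) (by decide) (by decide), hcd, hbd, hda, hac⟩
  · rintro ⟨a, b, c, d, hab, hbc, hcd, hbd, hda, hac⟩
    refine ⟨![a, b, c, d], isOcc_vincular3142_iff.2 ⟨⟨hab, Fin.lt_def.2 (by simp [hbc]), hcd⟩,
      hbd, hda, hac⟩, fun β hβ _ _ => ?_, fun h => absurd h (by decide),
      fun h => absurd h (by decide)⟩
    obtain rfl := Finset.mem_singleton.1 hβ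
    exact hbc

theorem barred41352_containedIn_iff {n : ℕ} (w : Perm (Fin n)) :
    barred41352.ContainedIn w ↔ ∃ a b c d : Fin n, a < b ∧ b < c ∧ c < d ∧
      w b < w d ∧ w d < w a ∧ w a < w c ∧ ∀ e, b < e → e < c → w e < w d ∨ w a < w e := by
  refine (BarredPattern.containedIn_singleton_iff (k := 4) (q := vincular3142.perm) (t := 2)
    (by unfold IsInsertionAt; decide) w).trans ⟨?_, ?_⟩
  · rintro ⟨h, hh, hext⟩
    obtain ⟨⟨hab, hbc, hcd⟩, hbd, hda, hac⟩ := isOcc_vincular3142_iff.1 hh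
    refine ⟨h 0, h 1, h 2, h 3, hab, hbc, hcd, hbd, hda, hac, fun e hbe hec => ?_⟩
    by_contra! hmid
    have hde : w (h 3) < w e := hmid.1.lt_of_ne (w.injective.ne (hec.trans hcd).ne')
    have hea : w e < w (h 0) := hmid.2.lt_of_ne (w.injective.ne (hab.trans hbe).ne')
    refine hext ⟨![h 0, h 1, e, h 2, h 3], isOcc_barred41352_iff.2
      ⟨⟨hab, hbe, hec, hcd⟩, hbd, hde, hea, hac⟩, funext fun i => ?_⟩
    fin_cases i <;> rfl
  · rintro ⟨a, b, c, d, hab, hbc, hcd, hbd, hda, hac, hgap⟩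
    refine ⟨![a, b, c, d], isOcc_vincular3142_iff.2 ⟨⟨hab, hbc, hcd⟩, hbd, hda, hac⟩, ?_⟩
    rintro ⟨f, hf, hfh⟩
    obtain ⟨⟨-, hbe, hec, -⟩, -, hde, hea, -⟩ := isOcc_barred41352_iff.1 hf
    obtain rfl : f 0 = a := congrFun hfh 0
    obtain rfl : f 1 = b := congrFun hfh 1
    obtain rfl : f 3 = c := congrFun hfh 2
    obtain rfl : f 4 = d := congrFun hfh 3
    rcases hgap (f 2) hbe hec with h | h
    · exact lt_asymm h hde
    · exact lt_asymm h hea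

/-- A permutation avoids the barred pattern `41‾352` if and
only if it avoids the vincular pattern `3[14]2`;
that is, `Av(41‾352) = Av(3[14]2)`. -/
theorem av_barred41352_eq_av_vincular3142 :
    AvB barred41352 = AvV vincular3142 := by
  ext ⟨n, w⟩
  change ¬ _ ↔ ¬ _
  rw [not_iff_not, barred41352_containedIn_iff, vincular3142_containedIn_iff]
  constructor
  · rintro ⟨a, b, c, d, hab, hbc, hcd, hbd, hda, hac, hgap⟩
    obtain ⟨e, e', hbe, he', he'c, hed, hae'⟩ := Fin.exists_adjacent_jump w hbc hbd hac hgap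
    exact ⟨a, e, e', d, hab.trans_le hbe, he', he'c.trans_lt hcd, hed, hda, hae'⟩
  · rintro ⟨a, b, c, d, hab, hbc, hcd, hbd, hda, hac⟩
    refine ⟨a, b, c, d, hab, Fin.lt_def.2 (by omega), hcd, hbd, hda, hac, fun e hbe hec => ?_⟩
    rw [Fin.lt_def] at hbe hec
    omega
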